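/- Let WN = (P, T, F) be a sound workflow net. Then every transition t in ▶• (the postset of the initial place) has ▶ as its unique input place: if (p, t) ∈ F for some place p, then p = ▶. (Otherwise t would be a dead transition, contradicting soundness, since the initial marking assigns no token to p and no marking except the initial one assigns a token to ▶.) -/

import Mathlib

open Classical

/-- The edge relation of the underlying bipartite graph of a Petri net:
places and transitions are nodes, flow pairs are directed edges. -/
def NetEdge {P T : Type} (Fpt : P → T → Prop) (Ftp : T → P → Prop) :
    (P ⊕ T) → (P ⊕ T) → Prop
  | Sum.inl p, Sum.inr t => Fpt p t
  | Sum.inr t, Sum.inl p => Ftp t p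
  | _, _ => False

/-- A workflow net: a Petri net with flow relation split into its
place-to-transition part `Fpt` and transition-to-place part `Ftp`,
a unique initial place `source` (empty preset), a unique output place `sink`
(empty postset), and every node on a directed path from `source` to `sink`. -/
structure WorkflowNet (P T : Type) where
  Fpt : P → T → Prop
  Ftp : T → P → Prop
  source : P
  sink : P
  source_pre_empty : ∀ t, ¬ Ftp t source
  sink_post_empty : ∀ t, ¬ Fpt sink t
  source_unique : ∀ p, (∀ t, ¬ Ftp t p) → p = source
  sink_unique : ∀ p, (∀ t, ¬ Fpt p t) → p = sink
  on_path : ∀ x : P ⊕ T,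
    Relation.ReflTransGen (NetEdge Fpt Ftp) (Sum.inl source) x ∧
    Relation.ReflTransGen (NetEdge Fpt Ftp) x (Sum.inl sink)

variable {P T : Type}

/-- The preset `•p` of a place: transitions `t` with `(t, p) ∈ F`. -/
def preset (N : WorkflowNet P T) (p : P) : Set T := {t | N.Ftp t p}

/-- The postset `p•` of a place: transitions `t` with `(p, t) ∈ F`. -/
def postset (N : WorkflowNet P T) (p : P) : Set T := {t | N.Fpt p t}

/-- The initial marking: one token on the initial place, none elsewhere. -/
noncomputable def initialMarking (N : WorkflowNet P T) : P → ℕ :=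
  fun p => if p = N.source then 1 else 0

/-- The final marking: one token on the output place, none elsewhere. -/
noncomputable def finalMarking (N : WorkflowNet P T) : P → ℕ :=
  fun p => if p = N.sink then 1 else 0

/-- A marking enables `t` iff every input place of `t` holds a token. -/
def Enables (N : WorkflowNet P T) (M : P → ℕ) (t : T) : Prop :=
  ∀ p, N.Fpt p t → 0 < M p

/-- `Fires N M t M'`: `t` is enabled at `M` and firing it yields `M'`. -/
def Fires (N : WorkflowNet P T) (M : P → ℕ) (t : T) (M' : P → ℕ) : Prop :=
  Enables N M t ∧ ∀ p,
    (N.Fpt p t ∧ ¬ N.Ftp t p → M' p = M p - 1) ∧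
    (N.Ftp t p ∧ ¬ N.Fpt p t → M' p = M p + 1) ∧
    (¬ (N.Fpt p t ∧ ¬ N.Ftp t p) → ¬ (N.Ftp t p ∧ ¬ N.Fpt p t) → M' p = M p)

/-- Successive firing of a finite sequence of transitions from a marking. -/
inductive FiresSeq (N : WorkflowNet P T) : (P → ℕ) → List T → (P → ℕ) → Prop
  | nil (M : P → ℕ) : FiresSeq N M [] M
  | cons {M M' M'' : P → ℕ} {t : T} {σ : List T} :
      Fires N M t M' → FiresSeq N M' σ M'' → FiresSeq N M (t :: σ) M''

/-- A firing sequence: fireable successively from the initial marking. -/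
def FiringSequence (N : WorkflowNet P T) (σ : List T) : Prop :=
  ∃ M, FiresSeq N (initialMarking N) σ M

/-- A reachable marking. -/
def Reachable (N : WorkflowNet P T) (M : P → ℕ) : Prop :=
  ∃ σ, FiresSeq N (initialMarking N) σ M

/-- A run: a firing sequence leading from the initial to the final marking. -/
def IsRun (N : WorkflowNet P T) (σ : List T) : Prop :=
  FiresSeq N (initialMarking N) σ (finalMarking N)

/-- Safety: every reachable marking puts at most one token in each place. -/
def Safe (N : WorkflowNet P T) : Prop :=
  ∀ M, Reachable N M → ∀ p, M p ≤ 1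

/-- Soundness: option to complete, proper completion, no dead transitions. -/
def Sound (N : WorkflowNet P T) : Prop :=
  (∀ M, Reachable N M → ∃ σ, FiresSeq N M σ (finalMarking N)) ∧
  (∀ M, Reachable N M → 0 < M N.sink → M = finalMarking N) ∧
  (∀ t : T, ∃ M, Reachable N M ∧ Enables N M t)

/-- `AtMostOne(A)`: at most one position of the trace carries a symbol of `A`. -/
def AtMostOneC {α : Type} (A : Set α) (σ : List α) : Prop :=
  ∀ i j : Fin σ.length, σ.get i ∈ A → σ.get j ∈ A → i = j

/-- `End(A)`: the trace is nonempty and its last symbol is in `A`. -/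
def EndC {α : Type} (A : Set α) (σ : List α) : Prop :=
  ∃ a ∈ A, σ.getLast? = some a

/-- `AlternatePrecedence(B, A)`: every `A`-position is preceded by a `B`-position
with no `A`-position strictly in between. -/
def AltPrecC {α : Type} (B A : Set α) (σ : List α) : Prop :=
  ∀ i : Fin σ.length, σ.get i ∈ A →
    ∃ j : Fin σ.length, j < i ∧ σ.get j ∈ B ∧
      ∀ k : Fin σ.length, j < k → k < i → σ.get k ∉ A

/-- The Declare constraint that Algorithm 1 generates from place `p`:
`AlternatePrecedence(•p, p•)` if both `•p` and `p•` are nonempty,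
`AtMostOne(p•)` if `•p = ∅`, and `End(•p)` if `p• = ∅`. -/
def PlaceConstraint (N : WorkflowNet P T) (p : P) (σ : List T) : Prop :=
  if preset N p = ∅ then AtMostOneC (postset N p) σ
  else if postset N p = ∅ then EndC (preset N p) σ
  else AltPrecC (preset N p) (postset N p) σ

/-- A model trace of the specification `DS(WN)`: it satisfies the
constraint generated from every place of the net. -/
def ModelTrace (N : WorkflowNet P T) (σ : List T) : Prop :=
  ∀ p : P, PlaceConstraint N p σ

/-! The initial place has an empty preset, so firing never adds a token to it, and every
transition has an input place, so the first firing from the initial marking empties it. Hence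
the initial marking is the only reachable marking that marks `▶`. A transition of `▶•` that
soundness enables somewhere is therefore enabled at the initial marking, where only `▶` is
marked. -/

theorem WorkflowNet.exists_input (N : WorkflowNet P T) (t : T) : ∃ p, N.Fpt p t := by
  obtain ⟨hpath, _⟩ := N.on_path (Sum.inr t)
  rcases hpath.cases_tail with h | ⟨x, _, hx⟩
  · exact absurd h (by simp)
  · cases x with
    | inl p => exact ⟨p, hx⟩
    | inr _ => exact (hx : False).elim

theorem initialMarking_pos_iff (N : WorkflowNet P T) {p : P} :
    0 < initialMarking N p ↔ p = N.source := by
  unfold initialMarking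
  split_ifs with h <;> simp [h]

theorem Fires.source_le {N : WorkflowNet P T} {M M' : P → ℕ} {t : T} (h : Fires N M t M') :
    M' N.source ≤ M N.source := by
  obtain ⟨hconsume, -, hkeep⟩ := h.2 N.source
  by_cases hin : N.Fpt N.source t
  · rw [hconsume ⟨hin, N.source_pre_empty t⟩]
    exact Nat.sub_le _ _
  · rw [hkeep (fun h => hin h.1) (fun h => N.source_pre_empty t h.1)]

theorem FiresSeq.source_le {N : WorkflowNet P T} {M M' : P → ℕ} {σ : List T}
    (h : FiresSeq N M σ M') : M' N.source ≤ M N.source := by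
  induction h with
  | nil => exact le_rfl
  | cons hfire _ ih => exact ih.trans hfire.source_le

theorem Fires.source_eq_zero_of_initialMarking {N : WorkflowNet P T} {M' : P → ℕ} {t : T}
    (h : Fires N (initialMarking N) t M') : M' N.source = 0 := by
  obtain ⟨q, hq⟩ := N.exists_input t
  have hqs : q = N.source := (initialMarking_pos_iff N).1 (h.1 q hq)
  rw [hqs] at hq
  rw [(h.2 N.source).1 ⟨hq, N.source_pre_empty t⟩]
  simp [initialMarking]

theorem Reachable.eq_initialMarking_of_source_pos {N : WorkflowNet P T} {M : P → ℕ}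
    (h : Reachable N M) (hsource : 0 < M N.source) : M = initialMarking N := by
  obtain ⟨σ, hσ⟩ := h
  cases hσ with
  | nil => rfl
  | cons hfire hrest =>
    have hle := hrest.source_le
    rw [hfire.source_eq_zero_of_initialMarking] at hle
    omega

theorem source_postset_unique_input_general {P T : Type}
    (N : WorkflowNet P T) (hsound : Sound N) :
    ∀ t ∈ postset N N.source, ∀ p : P, N.Fpt p t → p = N.source := by
  intro t ht p hpt
  obtain ⟨M, hM, hen⟩ := hsound.2.2 t
  have hM₀ : M = initialMarking N := hM.eq_initialMarking_of_source_pos (hen N.source ht)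
  exact (initialMarking_pos_iff N).1 (hM₀ ▸ hen p hpt)

/-- In a sound workflow net, every transition in `▶•` has `▶` as its unique
input place. -/
theorem source_postset_unique_input {P T : Type} [Finite P] [Finite T]
    (N : WorkflowNet P T) (hsound : Sound N) :
    ∀ t ∈ postset N N.source, ∀ p : P, N.Fpt p t → p = N.source :=
  source_postset_unique_input_general N hsound
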